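/- Let (𝒳, ω) be a pair of classes of objects in an abelian category 𝒞 such that ω^∧ ⊆ 𝒳, 𝒳 is left thick, and ω is closed under direct summands and is a relative cogenerator in 𝒳. The following are equivalent: (a) (𝒳, ω^∧) is a left Frobenius pair in 𝒞; (b) ω = 𝒳^⊥ ∩ 𝒳. Moreover, if either of these equivalent conditions holds, then ω = ω^∧. -/

import Mathlib

namespace CutPaper

open CategoryTheory CategoryTheory.Limits CategoryTheory.Abelian ZeroObject

universe w v u

variable {C : Type u} [Category.{v} C] [Abelian C]

/-- There exists a short exact sequence `0 ⟶ X ⟶ Y ⟶ Z ⟶ 0` in `C`. -/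
def SES (X Y Z : C) : Prop :=
  ∃ (f : X ⟶ Y) (g : Y ⟶ Z) (zero : f ≫ g = 0),
    (ShortComplex.mk f g zero).ShortExact

/-- A class of objects is closed under isomorphisms. -/
def ClosedUnderIso (A : Set C) : Prop :=
  ∀ ⦃X Y : C⦄, (X ≅ Y) → X ∈ A → Y ∈ A

/-- A class of objects is closed under direct summands (i.e. retracts). -/
def ClosedUnderDirectSummands (A : Set C) : Prop :=
  ∀ ⦃X Y : C⦄ (i : X ⟶ Y) (r : Y ⟶ X), i ≫ r = 𝟙 X → Y ∈ A → X ∈ A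

/-- A class of objects is closed under extensions. -/
def ClosedUnderExtensions (A : Set C) : Prop :=
  ∀ ⦃X Y Z : C⦄, SES X Y Z → X ∈ A → Z ∈ A → Y ∈ A

/-- A class of objects is closed under kernels of epimorphisms between its objects. -/
def ClosedUnderEpiKernels (A : Set C) : Prop :=
  ∀ ⦃X Y Z : C⦄, SES X Y Z → Y ∈ A → Z ∈ A → X ∈ A

/-- A class of objects is closed under cokernels of monomorphisms between its objects. -/
def ClosedUnderMonoCokernels (A : Set C) : Prop :=
  ∀ ⦃X Y Z : C⦄, SES X Y Z → X ∈ A → Y ∈ A → Z ∈ A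

/-- A class is left thick if it is closed under extensions, epi-kernels and direct summands. -/
def LeftThick (A : Set C) : Prop :=
  ClosedUnderExtensions A ∧ ClosedUnderEpiKernels A ∧ ClosedUnderDirectSummands A

/-- A class is right thick if closed under extensions, mono-cokernels and direct summands. -/
def RightThick (A : Set C) : Prop :=
  ClosedUnderExtensions A ∧ ClosedUnderMonoCokernels A ∧ ClosedUnderDirectSummands A

/-- A class is thick if it is both left and right thick. -/
def IsThickClass (A : Set C) : Prop := LeftThick A ∧ RightThick A

/-- The smallest thick class containing `F`. -/
def ThickClosure (F : Set C) : Set C := ⋂₀ {T : Set C | IsThickClass T ∧ F ⊆ T}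

/-- A class is closed under finite (binary) coproducts. -/
def ClosedUnderBinaryCoproducts (A : Set C) : Prop :=
  ∀ ⦃X Y : C⦄, X ∈ A → Y ∈ A → (X ⊞ Y) ∈ A

/-- `ω` is a relative cogenerator in `A`: `ω ⊆ A` and every `X ∈ A` fits in a short
exact sequence `0 → X → W → X' → 0` with `W ∈ ω`, `X' ∈ A`. -/
def IsRelativeCogenerator (ω A : Set C) : Prop :=
  ω ⊆ A ∧ ∀ X ∈ A, ∃ W X', W ∈ ω ∧ X' ∈ A ∧ SES X W X'

/-- `ν` is a relative generator in `ω`: `ν ⊆ ω` and every `W ∈ ω` fits in a short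
exact sequence `0 → W' → V → W → 0` with `V ∈ ν`, `W' ∈ ω`. -/
def IsRelativeGenerator (ν ω : Set C) : Prop :=
  ν ⊆ ω ∧ ∀ W ∈ ω, ∃ V W', V ∈ ν ∧ W' ∈ ω ∧ SES W' V W

/-- The objects of `B`-resolution dimension at most `n` (the class `B^∧_n`). -/
def ResDimLE (B : Set C) : ℕ → Set C
  | 0 => {X | ∃ B₀ ∈ B, Nonempty (X ≅ B₀)}
  | (n + 1) => ResDimLE B n ∪ {X | ∃ K B₀, K ∈ ResDimLE B n ∧ B₀ ∈ B ∧ SES K B₀ X}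

/-- The class `B^∧` of objects of finite `B`-resolution dimension. -/
def ResFin (B : Set C) : Set C := {X | ∃ n, X ∈ ResDimLE B n}

/-- The `B`-resolution dimension of an object, valued in `ℕ∞`. -/
noncomputable def resDim (B : Set C) (X : C) : ℕ∞ :=
  sInf ((fun n : ℕ => (n : ℕ∞)) '' {n | X ∈ ResDimLE B n})

/-- The objects of `B`-coresolution dimension at most `n` (the class `B^∨_n`). -/
def CoresDimLE (B : Set C) : ℕ → Set C
  | 0 => {X | ∃ B₀ ∈ B, Nonempty (X ≅ B₀)}
  | (n + 1) => CoresDimLE B n ∪ {X | ∃ B₀ K, B₀ ∈ B ∧ K ∈ CoresDimLE B n ∧ SES X B₀ K}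

/-- The `B`-coresolution dimension of an object, valued in `ℕ∞`. -/
noncomputable def coresDim (B : Set C) (X : C) : ℕ∞ :=
  sInf ((fun n : ℕ => (n : ℕ∞)) '' {n | X ∈ CoresDimLE B n})

/-- The class of `(𝒳, 𝒴)`-Gorenstein projective objects: 0-th cycles of exact,
`Hom(-, 𝒴)`-acyclic complexes with components in `𝒳`. -/
def GorensteinProj (𝒳 𝒴 : Set C) : Set C :=
  {M | ∃ K : ChainComplex C ℤ,
    (∀ m : ℤ, K.X m ∈ 𝒳) ∧
    (∀ m : ℤ, K.ExactAt m) ∧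
    (∀ Y₀ ∈ 𝒴, ∀ m : ℤ, ∀ f : K.X m ⟶ Y₀, K.d (m + 1) m ≫ f = 0 →
      ∃ g : K.X (m - 1) ⟶ Y₀, K.d m (m - 1) ≫ g = f) ∧
    Nonempty (M ≅ K.cycles 0)}

section HasExt

variable [HasExt.{w} C]

/-- `Ext¹(A, B) = 0`. -/
def ext1Zero (A B : C) : Prop := Subsingleton (Abelian.Ext.{w} A B 1)

/-- `Extⁱ(A, B) = 0` for all `i ≥ 1`. -/
def extVanish (A B : C) : Prop := ∀ i : ℕ, 1 ≤ i → Subsingleton (Abelian.Ext.{w} A B i)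

/-- `Extⁱ(X, Y) = 0` for all `i ≥ 1`, `X ∈ 𝒜`, `Y ∈ ℬ`. -/
def ExtPairVanish (𝒜 ℬ : Set C) : Prop := ∀ X ∈ 𝒜, ∀ Y ∈ ℬ, extVanish.{w} X Y

/-- The right `Ext¹`-orthogonal complement `𝒜^{⊥1}`. -/
def rightPerp1 (𝒜 : Set C) : Set C := {N | ∀ X ∈ 𝒜, ext1Zero.{w} X N}

/-- The total right orthogonal complement `𝒜^{⊥}`. -/
def rightPerp (𝒜 : Set C) : Set C := {N | ∀ X ∈ 𝒜, extVanish.{w} X N}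

/-- The left `Ext¹`-orthogonal complement `^{⊥1}ℬ`. -/
def leftPerp1 (ℬ : Set C) : Set C := {M | ∀ Y ∈ ℬ, ext1Zero.{w} M Y}

/-- `(𝒜, ℬ)` is a left cotorsion pair cut along `𝒮`. -/
def LeftCutCotorsion (𝒜 ℬ 𝒮 : Set C) : Prop :=
  ClosedUnderDirectSummands 𝒜 ∧ 𝒜 ∩ 𝒮 = leftPerp1.{w} ℬ ∩ 𝒮

/-- `(𝒜, ℬ)` is a complete left cotorsion pair cut along `𝒮`. -/
def CompleteLeftCutCotorsion (𝒜 ℬ 𝒮 : Set C) : Prop :=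
  LeftCutCotorsion.{w} 𝒜 ℬ 𝒮 ∧ ∀ S ∈ 𝒮, ∃ B₀ A₀, B₀ ∈ ℬ ∧ A₀ ∈ 𝒜 ∧ SES B₀ A₀ S

/-- `(𝒜, ℬ)` is a right cotorsion pair cut along `𝒮`. -/
def RightCutCotorsion (𝒜 ℬ 𝒮 : Set C) : Prop :=
  ClosedUnderDirectSummands ℬ ∧ ℬ ∩ 𝒮 = rightPerp1.{w} 𝒜 ∩ 𝒮

/-- `(𝒜, ℬ)` is a complete right cotorsion pair cut along `𝒮`. -/
def CompleteRightCutCotorsion (𝒜 ℬ 𝒮 : Set C) : Prop :=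
  RightCutCotorsion.{w} 𝒜 ℬ 𝒮 ∧ ∀ S ∈ 𝒮, ∃ B₀ A₀, B₀ ∈ ℬ ∧ A₀ ∈ 𝒜 ∧ SES S B₀ A₀

/-- `(𝒜, ℬ)` is a complete cotorsion pair cut along `𝒮`. -/
def CompleteCutCotorsion (𝒜 ℬ 𝒮 : Set C) : Prop :=
  CompleteLeftCutCotorsion.{w} 𝒜 ℬ 𝒮 ∧ CompleteRightCutCotorsion.{w} 𝒜 ℬ 𝒮

/-- `(𝒜, ℬ)` is a complete left cotorsion pair in `C`. -/
def CompleteLeftCotorsionPair (𝒜 ℬ : Set C) : Prop :=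
  𝒜 = leftPerp1.{w} ℬ ∧ ∀ X : C, ∃ B₀ A₀, B₀ ∈ ℬ ∧ A₀ ∈ 𝒜 ∧ SES B₀ A₀ X

/-- `(𝒜, ℬ)` is a complete cotorsion pair in `C`. -/
def CompleteCotorsionPair (𝒜 ℬ : Set C) : Prop :=
  CompleteLeftCotorsionPair.{w} 𝒜 ℬ ∧ ℬ = rightPerp1.{w} 𝒜 ∧
    ∀ X : C, ∃ B₀ A₀, B₀ ∈ ℬ ∧ A₀ ∈ 𝒜 ∧ SES X B₀ A₀

/-- `(𝒳, ω)` is a left Frobenius pair in `C`. -/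
def LeftFrobenius (𝒳 ω : Set C) : Prop :=
  LeftThick 𝒳 ∧ ClosedUnderDirectSummands ω ∧
    ExtPairVanish.{w} 𝒳 ω ∧ IsRelativeCogenerator ω 𝒳

/-- `(𝒳, ω)` is a left Frobenius pair cut along `𝒮`. -/
def LeftFrobeniusCutAlong (𝒳 ω 𝒮 : Set C) : Prop :=
  LeftThick 𝒳 ∧
  LeftFrobenius.{w} (𝒳 ∩ 𝒮) (ω ∩ 𝒮) ∧
  (ExtPairVanish.{w} (ω ∩ 𝒮) ω ∧ IsRelativeGenerator (ω ∩ 𝒮) ω) ∧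
  (ClosedUnderExtensions ω ∧ ClosedUnderDirectSummands ω)

/-- `(𝒜, ℬ)` is a left weak AB context in `C`. -/
def LeftWeakABContext (𝒜 ℬ : Set C) : Prop :=
  LeftFrobenius.{w} 𝒜 (𝒜 ∩ ℬ) ∧ RightThick ℬ ∧ ℬ ⊆ ResFin 𝒜

/-- `(𝒜, ℬ)` is a left weak AB context cut along `𝒮`. -/
def LeftWeakABContextCutAlong (𝒜 ℬ 𝒮 : Set C) : Prop :=
  LeftFrobeniusCutAlong.{w} 𝒜 (𝒜 ∩ ℬ) 𝒮 ∧ RightThick (ℬ ∩ 𝒮) ∧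
    ℬ ∩ 𝒮 ⊆ ResFin (𝒜 ∩ 𝒮)

/-- `(𝒳, 𝒴)` is a GP-admissible pair. -/
def GPAdmissible (𝒳 𝒴 : Set C) : Prop :=
  ExtPairVanish.{w} 𝒳 𝒴 ∧
  (∀ M : C, ∃ X₀, X₀ ∈ 𝒳 ∧ ∃ p : X₀ ⟶ M, Epi p) ∧
  ClosedUnderBinaryCoproducts 𝒳 ∧ ClosedUnderBinaryCoproducts 𝒴 ∧
  ClosedUnderExtensions 𝒳 ∧
  IsRelativeCogenerator (𝒳 ∩ 𝒴) 𝒳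

/-- The class `ℰ_l(𝒜, ℬ)` of objects admitting a suitable left approximation. -/
def EClassLeft (𝒜 ℬ : Set C) : Set C :=
  {X | ∃ B₀ A₀, B₀ ∈ ℬ ∧ A₀ ∈ 𝒜 ∧ SES B₀ A₀ X}

/-- The maximal left cotorsion cut `𝕊_l(𝒜, ℬ)`. -/
def MaxLeftCut (𝒜 ℬ : Set C) : Set C :=
  ⋃₀ {𝒮 | CompleteLeftCutCotorsion.{w} 𝒜 ℬ 𝒮}

/-- `pd(M) ≤ n`, via vanishing of `Ext` in degrees `> n`. -/
def pdLE (M : C) (n : ℕ) : Prop :=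
  ∀ i : ℕ, n < i → ∀ N : C, Subsingleton (Abelian.Ext.{w} M N i)

/-- The projective dimension of an object, valued in `ℕ∞`. -/
noncomputable def pd (M : C) : ℕ∞ :=
  sInf ((fun n : ℕ => (n : ℕ∞)) '' {n | pdLE.{w} M n})

/-- The projective dimension of a class of objects. -/
noncomputable def pdClass (𝒜 : Set C) : ℕ∞ := ⨆ M ∈ 𝒜, pd.{w} M

/-- The `𝔓_𝒮`-condition of the second correspondence theorem. -/
def PPair (𝒮 ℱ 𝒢 : Set C) : Prop :=
  CompleteCutCotorsion.{w} ℱ 𝒢 (ThickClosure ℱ) ∧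
  ExtPairVanish.{w} ℱ 𝒢 ∧
  IsRelativeGenerator (ℱ ∩ 𝒢 ∩ 𝒮) (ℱ ∩ 𝒢) ∧
  IsRelativeCogenerator (ℱ ∩ 𝒢 ∩ 𝒮) (ℱ ∩ 𝒢)

end HasExt

/-- The class of projective objects of `C`. -/
def ProjClass (C : Type u) [Category.{v} C] : Set C := {P : C | Projective P}

section HasExt
variable (C) [HasExt.{w} C]

/-- The finitistic dimension of `C`. -/
noncomputable def Findim : ℕ∞ := pdClass.{w} (ResFin (ProjClass C))

end HasExt

/-!
If `ω = 𝒳^⊥ ∩ 𝒳`, the long exact `Ext` sequence makes `ω` closed under cokernels of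
monomorphisms (the cokernel lies in `ω^∧ ⊆ 𝒳`), so every finite `ω`-resolution collapses and
`ω^∧ = ω`; the pair `(𝒳, ω)` is then left Frobenius. Conversely, if `(𝒳, ω^∧)` is left Frobenius,
each `N ∈ 𝒳^⊥ ∩ 𝒳` has a cogenerating sequence `0 → N → W → N' → 0` with `W ∈ ω`, which splits
because `Ext¹(N', N) = 0`, so `N` is a summand of `W`.
-/

section ShortExact

variable [HasExt.{w} C]

lemma _root_.CategoryTheory.ShortComplex.ShortExact.exists_retraction_of_subsingleton_ext
    {S : ShortComplex C} (hS : S.ShortExact) (h : Subsingleton (Ext.{w} S.X₃ S.X₁ 1)) :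
    ∃ r : S.X₂ ⟶ S.X₁, S.f ≫ r = 𝟙 S.X₁ := by
  obtain ⟨x, hx⟩ := Ext.contravariant_sequence_exact₁ hS S.X₁ (Ext.mk₀ (𝟙 S.X₁)) (add_zero 1)
    (h.elim _ _)
  refine ⟨Ext.homEquiv₀ x, (Ext.mk₀_bijective _ _).1 ?_⟩
  rw [← Ext.mk₀_comp_mk₀, Ext.mk₀_homEquiv₀_apply, hx]

lemma _root_.CategoryTheory.ShortComplex.ShortExact.subsingleton_ext_X₃
    {S : ShortComplex C} (hS : S.ShortExact) (Y : C) {i : ℕ}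
    (h₂ : Subsingleton (Ext.{w} Y S.X₂ i)) (h₁ : Subsingleton (Ext.{w} Y S.X₁ (i + 1))) :
    Subsingleton (Ext.{w} Y S.X₃ i) := by
  refine subsingleton_of_forall_eq 0 fun x => ?_
  obtain ⟨x₂, rfl⟩ := Ext.covariant_sequence_exact₃ Y hS x rfl (h₁.elim _ _)
  rw [h₂.elim x₂ 0, Ext.zero_comp]

end ShortExact

section Resolutions

variable {B : Set C}

lemma subset_resFin (B : Set C) : B ⊆ ResFin B :=
  fun X hX => ⟨0, X, hX, ⟨Iso.refl X⟩⟩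

lemma mem_resFin_of_SES {K B₀ X : C} (hK : K ∈ B) (hB₀ : B₀ ∈ B) (h : SES K B₀ X) :
    X ∈ ResFin B :=
  ⟨1, Or.inr ⟨K, B₀, ⟨K, hK, ⟨Iso.refl K⟩⟩, hB₀, h⟩⟩

lemma resDimLE_subset_self (hs : ClosedUnderDirectSummands B) (hc : ClosedUnderMonoCokernels B) :
    ∀ n, ResDimLE B n ⊆ B
  | 0 => fun _ ⟨_, hB₀, ⟨e⟩⟩ => hs e.hom e.inv e.hom_inv_id hB₀
  | n + 1 => by
    rintro X (hX | ⟨K, B₀, hK, hB₀, hses⟩)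
    · exact resDimLE_subset_self hs hc n hX
    · exact hc hses (resDimLE_subset_self hs hc n hK) hB₀

lemma resFin_eq_self (hs : ClosedUnderDirectSummands B) (hc : ClosedUnderMonoCokernels B) :
    ResFin B = B :=
  Set.Subset.antisymm (fun _ ⟨n, hn⟩ => resDimLE_subset_self hs hc n hn) (subset_resFin B)

end Resolutions

section Orthogonality

variable [HasExt.{w} C] {𝒳 ω : Set C}

lemma rightPerp_closedUnderMonoCokernels (𝒜 : Set C) :
    ClosedUnderMonoCokernels (rightPerp.{w} 𝒜) := by
  rintro X₁ X₂ X₃ ⟨f, g, zero, hS⟩ h₁ h₂ A hA i hi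
  exact hS.subsingleton_ext_X₃ A (h₂ A hA i hi) (h₁ A hA (i + 1) (by omega))

lemma closedUnderMonoCokernels_of_eq_rightPerp_inter (hω : ω = rightPerp.{w} 𝒳 ∩ 𝒳)
    (h0 : ResFin ω ⊆ 𝒳) : ClosedUnderMonoCokernels ω := by
  intro X₁ X₂ X₃ hses h₁ h₂
  have hX₃ := h0 (mem_resFin_of_SES h₁ h₂ hses)
  rw [hω] at h₁ h₂ ⊢
  exact ⟨rightPerp_closedUnderMonoCokernels 𝒳 hses h₁.1 h₂.1, hX₃⟩

lemma rightPerp_inter_subset_of_isRelativeCogenerator (hs : ClosedUnderDirectSummands ω)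
    (hω : IsRelativeCogenerator ω 𝒳) : rightPerp.{w} 𝒳 ∩ 𝒳 ⊆ ω := by
  rintro N ⟨hN, hN𝒳⟩
  obtain ⟨W, N', hW, hN', f, g, zero, hS⟩ := hω.2 N hN𝒳
  obtain ⟨r, hr⟩ := hS.exists_retraction_of_subsingleton_ext (hN N' hN' 1 le_rfl)
  exact hs f r hr hW

lemma eq_rightPerp_inter_of_leftFrobenius_resFin (hs : ClosedUnderDirectSummands ω)
    (hω : IsRelativeCogenerator ω 𝒳) (hF : LeftFrobenius.{w} 𝒳 (ResFin ω)) :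
    ω = rightPerp.{w} 𝒳 ∩ 𝒳 :=
  Set.Subset.antisymm
    (fun W hW => ⟨fun X hX => hF.2.2.1 X hX W (subset_resFin ω hW), hω.1 hW⟩)
    (rightPerp_inter_subset_of_isRelativeCogenerator hs hω)

end Orthogonality

/-- Proposition 3.10. Let `(𝒳, ω)` be classes with `ω^∧ ⊆ 𝒳`, `𝒳` left
thick, `ω` closed under direct summands and a relative cogenerator in `𝒳`. Then
`(𝒳, ω^∧)` is a left Frobenius pair iff `ω = 𝒳^⊥ ∩ 𝒳`; and in that case `ω = ω^∧`. -/
theorem leftFrobenius_resFin_iff_rightPerp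
    {C : Type u} [CategoryTheory.Category.{v} C] [CategoryTheory.Abelian C]
    [CategoryTheory.HasExt.{w} C]
    (𝒳 ω : Set C)
    (h0 : ResFin ω ⊆ 𝒳) (h1 : LeftThick 𝒳)
    (h2 : ClosedUnderDirectSummands ω) (h3 : IsRelativeCogenerator ω 𝒳) :
    (LeftFrobenius.{w} 𝒳 (ResFin ω) ↔ ω = rightPerp.{w} 𝒳 ∩ 𝒳) ∧
    (ω = rightPerp.{w} 𝒳 ∩ 𝒳 → ω = ResFin ω) := by
  have resFin_eq : ω = rightPerp.{w} 𝒳 ∩ 𝒳 → ω = ResFin ω := fun hω =>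
    (resFin_eq_self h2 (closedUnderMonoCokernels_of_eq_rightPerp_inter hω h0)).symm
  refine ⟨⟨eq_rightPerp_inter_of_leftFrobenius_resFin h2 h3, fun hω => ?_⟩, resFin_eq⟩
  rw [← resFin_eq hω]
  refine ⟨h1, h2, fun X hX W hW => ?_, h3⟩
  rw [hω] at hW
  exact hW.1 X hX

end CutPaper
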